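/- Let L(T₁,T₂), g(T₁,T₂) ∈ Z_p[[T₁,T₂]] with p ∤ g(T₁,0), and suppose that for every power series c obtained as a remainder of Weierstrass division of L by g in (Z_p[[T₂]])[[T₁]], each coefficient c_j(T₂) ∈ Z_p[[T₂]] vanishes at ψ(T₂) = ζ − 1 for all p-power roots of unity ζ. Then g divides L in Z_p[[T₁,T₂]]. -/

import Mathlib

/-!
Since `g = u P` with `P` distinguished at the maximal ideal `(p, T₂)` of `ℤ_p[[T₂]]`, Weierstrass
division by `P` gives `L = h g + r` with `deg r < m`. It applies because `ℤ_p[[T₂]]` is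
`(p, T₂)`-adically complete, which follows from: `f ∈ (p, T₂)ⁿ` iff `p^(n-j)` divides the `j`-th
coefficient of `f` for every `j`.

So it suffices that a series `c ∈ ℤ_p[[T]]` vanishing at every `ζ - 1` is zero. Otherwise let
`c_d` be the first coefficient of maximal norm. For `ζ` of order `p^(d+1)`, evaluating the
cyclotomic polynomial at `1` gives `‖ζ - 1‖ ^ (p^d (p - 1)) = p⁻¹`, hence
`p⁻¹ < ‖ζ - 1‖ ^ d < 1`. Then `c_d (ζ - 1)^d` strictly dominates every other term of `c(ζ - 1)`,
which therefore has the norm of that term and is nonzero.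
-/

open PowerSeries

/-- Evaluation of a power series `c ∈ ℤ_p[[T]]` at an element `z` of a complete
nonarchimedean normed field `K` extending `ℚ_p` (convergent when `‖z‖ < 1`). -/
noncomputable def pSeriesEval (p : ℕ) [Fact p.Prime] (K : Type*) [NormedField K]
    [CompleteSpace K] [Algebra ℚ_[p] K] (c : PowerSeries ℤ_[p]) (z : K) : K :=
  ∑' i : ℕ, algebraMap ℚ_[p] K ((PowerSeries.coeff (R := ℤ_[p]) i c : ℚ_[p])) * z ^ i

open IsLocalRing
open scoped Polynomial

namespace PowerSeries

variable {R : Type*} [CommRing R] (I : Ideal R)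

theorem coeff_mem_pow_of_mem_map_C_sup_span_X_pow {n : ℕ} {f : R⟦X⟧}
    (hf : f ∈ (I.map C ⊔ Ideal.span {X}) ^ n) (j : ℕ) : coeff j f ∈ I ^ (n - j) := by
  induction n generalizing f j with
  | zero => simp
  | succ n ih =>
    have hJ : I.map C ⊔ Ideal.span {X} ≤ I.comap (constantCoeff (R := R)) :=
      sup_le (Ideal.map_le_iff_le_comap.mpr fun a ha => by simpa using ha)
        ((Ideal.span_singleton_le_iff_mem _).mpr (by simp))
    rw [pow_succ] at hf
    refine Submodule.mul_induction_on (C := fun f => ∀ j, coeff j f ∈ I ^ (n + 1 - j)) hf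
      (fun x hx y hy j => ?_)
      (fun x y hx hy j => by rw [map_add]; exact add_mem (hx j) (hy j)) j
    rw [coeff_mul]
    refine Ideal.sum_mem _ fun ab hab => ?_
    rw [Finset.HasAntidiagonal.mem_antidiagonal] at hab
    have hy' : coeff ab.2 y ∈ I ^ (1 - ab.2) := by
      rcases Nat.eq_zero_or_pos ab.2 with h | h
      · simpa [h] using hJ hy
      · simp [Nat.sub_eq_zero_of_le h]
    exact Ideal.pow_le_pow_right (by omega)
      (pow_add I (n - ab.1) (1 - ab.2) ▸ Ideal.mul_mem_mul (ih hx ab.1) hy')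

theorem mem_map_C_sup_span_X_pow_of_coeff_mem_pow {n : ℕ} {f : R⟦X⟧}
    (hf : ∀ j, coeff j f ∈ I ^ (n - j)) : f ∈ (I.map C ⊔ Ideal.span {X}) ^ n := by
  induction n generalizing f with
  | zero => simp
  | succ n ih =>
    rw [eq_shift_mul_X_add_const f]
    refine add_mem (pow_succ (I.map C ⊔ Ideal.span {X}) n ▸
      Ideal.mul_mem_mul (ih fun j => ?_) (Ideal.mem_sup_right (Ideal.mem_span_singleton_self X))) ?_
    · simpa using hf (j + 1)
    · refine Ideal.pow_right_mono (le_sup_left : I.map C ≤ I.map C ⊔ Ideal.span {X}) _ ?_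
      rw [← Ideal.map_pow]
      exact Ideal.mem_map_of_mem _ (by simpa using hf 0)

theorem mem_map_C_sup_span_X_pow_iff {n : ℕ} {f : R⟦X⟧} :
    f ∈ (I.map C ⊔ Ideal.span {X}) ^ n ↔ ∀ j, coeff j f ∈ I ^ (n - j) :=
  ⟨coeff_mem_pow_of_mem_map_C_sup_span_X_pow I, mem_map_C_sup_span_X_pow_of_coeff_mem_pow I⟩

theorem isPrecomplete_map_C_sup_span_X [hI : IsPrecomplete I R] :
    IsPrecomplete (I.map C ⊔ Ideal.span {X}) R⟦X⟧ := by
  rw [isPrecomplete_iff] at hI ⊢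
  simp only [SModEq.sub_mem, smul_eq_mul, Ideal.mul_top, mem_map_C_sup_span_X_pow_iff,
    map_sub] at hI ⊢
  intro f hf
  have hcoeff (j : ℕ) : ∃ a : R, ∀ k, coeff j (f (k + j)) - a ∈ I ^ k :=
    hI (fun k => coeff j (f (k + j))) fun {k l} hkl => by
      simpa using hf (m := k + j) (by omega) j
  choose a ha using hcoeff
  refine ⟨mk a, fun n j => ?_⟩
  rcases le_or_gt j n with hjn | hnj
  · simpa [Nat.sub_add_cancel hjn] using ha j (n - j)
  · simp [Nat.sub_eq_zero_of_le hnj.le]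

theorem maximalIdeal_eq_map_C_sup_span_X [IsLocalRing R] :
    maximalIdeal R⟦X⟧ = (maximalIdeal R).map C ⊔ Ideal.span {X} := by
  refine le_antisymm (fun f hf => ?_) (sup_le ?_ ?_)
  · rw [eq_X_mul_shift_add_const f]
    refine add_mem
      (Ideal.mem_sup_right (Ideal.mul_mem_right _ _ (Ideal.mem_span_singleton_self X)))
      (Ideal.mem_sup_left (Ideal.mem_map_of_mem _ ?_))
    rwa [mem_maximalIdeal, mem_nonunits_iff, ← isUnit_iff_constantCoeff] at *
  · rw [Ideal.map_le_iff_le_comap]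
    intro a ha
    simpa [mem_maximalIdeal, isUnit_iff_constantCoeff] using ha
  · rw [Ideal.span_singleton_le_iff_mem, mem_maximalIdeal, mem_nonunits_iff,
      isUnit_iff_constantCoeff]
    simp

instance [IsLocalRing R] [IsNoetherianRing R] [IsAdicComplete (maximalIdeal R) R] :
    IsAdicComplete (maximalIdeal R⟦X⟧) R⟦X⟧ where
  toIsPrecomplete :=
    maximalIdeal_eq_map_C_sup_span_X (R := R) ▸ isPrecomplete_map_C_sup_span_X _

end PowerSeries

theorem Polynomial.IsDistinguishedAt.exists_eq_mul_add {A : Type*} [CommRing A] {I : Ideal A}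
    [IsAdicComplete I A] {g : A[X]} (hg : g.IsDistinguishedAt I) (hI : I ≠ ⊤) (f : A⟦X⟧) :
    ∃ (q : A⟦X⟧) (r : A[X]), r.degree < g.natDegree ∧ f = g * q + r := by
  have hdiv := (hg.isWeierstrassDivisorAt hI).isWeierstrassDivisionAt_div_mod f
  have hord :=
    hg.coe_natDegree_eq_order_map g 1 (by simpa [← Ideal.eq_top_iff_one]) (mul_one _).symm
  refine ⟨_, _, ?_, hdiv.eq_mul_add⟩
  simpa [← hord] using hdiv.degree_lt

section Ultrametric

variable {K : Type*} [NormedField K] [IsUltrametricDist K]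

theorem norm_pow_sub_one_le {ζ : K} (hζ : ‖ζ‖ ≤ 1) (n : ℕ) : ‖ζ ^ n - 1‖ ≤ ‖ζ - 1‖ := by
  rw [← geom_sum_mul, norm_mul]
  refine mul_le_of_le_one_left (norm_nonneg _)
    (IsUltrametricDist.norm_sum_le_of_forall_le_of_nonneg zero_le_one fun i _ => ?_)
  simpa using pow_le_one₀ (norm_nonneg ζ) hζ

theorem IsPrimitiveRoot.norm_sub_one_eq {ζ μ : K} {n : ℕ} [NeZero n] (hζ : IsPrimitiveRoot ζ n)
    (hμ : IsPrimitiveRoot μ n) : ‖μ - 1‖ = ‖ζ - 1‖ := by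
  have hnorm {ξ : K} (hξ : IsPrimitiveRoot ξ n) : ‖ξ‖ = 1 :=
    (pow_eq_one_iff_of_nonneg (norm_nonneg ξ) (NeZero.ne n)).mp
      (by rw [← norm_pow, hξ.pow_eq_one, norm_one])
  obtain ⟨i, -, rfl⟩ := hζ.eq_pow_of_pow_eq_one hμ.pow_eq_one
  obtain ⟨j, -, hj⟩ := hμ.eq_pow_of_pow_eq_one hζ.pow_eq_one
  refine le_antisymm (norm_pow_sub_one_le (hnorm hζ).le i) ?_
  simpa [hj] using norm_pow_sub_one_le (hnorm hμ).le j

theorem IsPrimitiveRoot.norm_sub_one_pow_totient {p : ℕ} [Fact p.Prime] {ζ : K} {k : ℕ}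
    (hζ : IsPrimitiveRoot ζ (p ^ (k + 1))) : ‖ζ - 1‖ ^ (p ^ (k + 1)).totient = ‖(p : K)‖ := by
  have : NeZero (p ^ (k + 1)) := ⟨pow_ne_zero _ (Fact.out : p.Prime).ne_zero⟩
  rw [← Polynomial.eval_one_cyclotomic_prime_pow k,
    Polynomial.cyclotomic_eq_prod_X_sub_primitiveRoots hζ, Polynomial.eval_prod, norm_prod,
    ← hζ.card_primitiveRoots, ← Finset.prod_const]
  refine Finset.prod_congr rfl fun μ hμ => ?_
  rw [Polynomial.eval_sub, Polynomial.eval_X, Polynomial.eval_C, norm_sub_rev 1 μ,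
    hζ.norm_sub_one_eq ((mem_primitiveRoots (NeZero.pos _)).mp hμ)]

theorem IsUltrametricDist.norm_tsum_eq_of_forall_ne_le {E ι : Type*} [NormedAddCommGroup E]
    [IsUltrametricDist E] {f : ι → E} (hf : Summable f) (i₀ : ι) {C : ℝ} (hC0 : 0 ≤ C)
    (hC : ∀ i ≠ i₀, ‖f i‖ ≤ C) (hlt : C < ‖f i₀‖) : ‖∑' i, f i‖ = ‖f i₀‖ := by
  classical
  have hrest : ‖∑' i, if i = i₀ then 0 else f i‖ ≤ C :=
    IsUltrametricDist.norm_tsum_le_of_forall_le_of_nonneg hC0 fun i => by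
      split_ifs with h
      · simpa using hC0
      · exact hC i h
  rw [hf.tsum_eq_add_tsum_ite i₀, IsUltrametricDist.norm_add_eq_max_of_norm_ne_norm
    (hrest.trans_lt hlt).ne', max_eq_left (hrest.trans hlt.le)]

end Ultrametric

namespace PadicInt

variable {p : ℕ} [Fact p.Prime]

theorem norm_mul_pow_le_norm_of_valuation_add_le {x y : ℤ_[p]} (hx : x ≠ 0) (hy : y ≠ 0)
    {k : ℕ} (h : y.valuation + k ≤ x.valuation) : ‖x‖ * (p : ℝ) ^ k ≤ ‖y‖ := by
  have hp : (1 : ℝ) ≤ p := by exact_mod_cast (Fact.out : p.Prime).one_le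
  rw [norm_eq_zpow_neg_valuation hx, norm_eq_zpow_neg_valuation hy, ← zpow_natCast,
    ← zpow_add₀ (by positivity)]
  exact zpow_le_zpow_right₀ hp (by omega)

theorem exists_first_max_norm {a : ℕ → ℤ_[p]} {j₀ : ℕ} (h₀ : a j₀ ≠ 0) :
    ∃ d, a d ≠ 0 ∧ (∀ j, ‖a j‖ ≤ ‖a d‖) ∧ ∀ j < d, ‖a j‖ * p ≤ ‖a d‖ := by
  classical
  have hval : ∃ v j, a j ≠ 0 ∧ (a j).valuation = v := ⟨_, j₀, h₀, rfl⟩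
  have hmin : ∃ j, a j ≠ 0 ∧ (a j).valuation = Nat.find hval := Nat.find_spec hval
  obtain ⟨hd, hdv⟩ := Nat.find_spec hmin
  refine ⟨Nat.find hmin, hd, fun j => ?_, fun j hj => ?_⟩
  · by_cases hj : a j = 0
    · simp [hj]
    · simpa using norm_mul_pow_le_norm_of_valuation_add_le hj hd (k := 0)
        (by simpa [hdv] using Nat.find_min' hval ⟨j, hj, rfl⟩)
  · by_cases hj0 : a j = 0
    · simp [hj0]
    · have hne : (a j).valuation ≠ Nat.find hval := fun h => Nat.find_min hmin hj ⟨hj0, h⟩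
      simpa using norm_mul_pow_le_norm_of_valuation_add_le hj0 hd (k := 1)
        (by have := Nat.find_min' hval ⟨j, hj0, rfl⟩; omega)

end PadicInt

section Evaluation

variable {p : ℕ} [Fact p.Prime] {K : Type*} [NormedField K] [IsUltrametricDist K]
  [Algebra ℚ_[p] K]

theorem exists_pow_eq_one_inv_lt_norm_sub_one_pow
    (hnorm : ∀ x : ℚ_[p], ‖algebraMap ℚ_[p] K x‖ = ‖x‖)
    (hroots : ∀ n : ℕ, ∃ ζ : K, orderOf ζ = p ^ n) (d : ℕ) :
    ∃ ζ : K, (∃ n : ℕ, ζ ^ p ^ n = 1) ∧ 0 < ‖ζ - 1‖ ∧ ‖ζ - 1‖ < 1 ∧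
      (p : ℝ)⁻¹ < ‖ζ - 1‖ ^ d := by
  obtain ⟨ζ, hζ⟩ := hroots (d + 1)
  have hprim : IsPrimitiveRoot ζ (p ^ (d + 1)) := hζ ▸ IsPrimitiveRoot.orderOf ζ
  have hpow : ‖ζ - 1‖ ^ (p ^ d * (p - 1)) = (p : ℝ)⁻¹ := by
    rw [← Nat.totient_prime_pow_succ Fact.out, hprim.norm_sub_one_pow_totient,
      ← map_natCast (algebraMap ℚ_[p] K), hnorm, Padic.norm_p]
  have hp : 1 < p := (Fact.out : p.Prime).one_lt
  have hexp : d < p ^ d * (p - 1) :=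
    (Nat.lt_pow_self hp).trans_le (Nat.le_mul_of_pos_right _ (by omega))
  have hlt : ‖ζ - 1‖ < 1 := (pow_lt_one_iff_of_nonneg (norm_nonneg _) (by omega)).mp
    (hpow ▸ inv_lt_one_of_one_lt₀ (by exact_mod_cast hp))
  have hpos : 0 < ‖ζ - 1‖ :=
    norm_pos_iff.mpr (sub_ne_zero.mpr (hprim.ne_one (Nat.one_lt_pow (by omega) hp)))
  exact ⟨ζ, ⟨d + 1, hprim.pow_eq_one⟩, hpos, hlt,
    hpow ▸ pow_lt_pow_right_of_lt_one₀ hpos hlt hexp⟩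

theorem PowerSeries.eq_zero_of_forall_pSeriesEval_eq_zero [CompleteSpace K]
    (hnorm : ∀ x : ℚ_[p], ‖algebraMap ℚ_[p] K x‖ = ‖x‖)
    (hroots : ∀ n : ℕ, ∃ ζ : K, orderOf ζ = p ^ n) {c : ℤ_[p]⟦X⟧}
    (hc : ∀ ζ : K, (∃ n : ℕ, ζ ^ p ^ n = 1) → pSeriesEval p K c (ζ - 1) = 0) : c = 0 := by
  by_contra hc0
  obtain ⟨j₀, hj₀⟩ : ∃ j, coeff j c ≠ 0 := by
    by_contra! h
    exact hc0 (PowerSeries.ext fun j => by simp [h j])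
  obtain ⟨d, hd, hmax, hlow⟩ := PadicInt.exists_first_max_norm (a := fun j => coeff j c) hj₀
  obtain ⟨ζ, hζ, hpos, hlt, hpd⟩ := exists_pow_eq_one_inv_lt_norm_sub_one_pow hnorm hroots d
  set s := ‖ζ - 1‖
  set f : ℕ → K := fun i =>
    algebraMap ℚ_[p] K ((coeff i c : ℤ_[p]) : ℚ_[p]) * (ζ - 1) ^ i
  have hf (i : ℕ) : ‖f i‖ = ‖coeff i c‖ * s ^ i := by
    simp only [f, s, norm_mul, norm_pow, hnorm, PadicInt.padic_norm_e_of_padicInt]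
  have hsum : Summable f := .of_norm_bounded (summable_geometric_of_lt_one hpos.le hlt) fun i =>
    (hf i).trans_le (mul_le_of_le_one_left (by positivity) (PadicInt.norm_le_one _))
  have hcd : 0 < ‖coeff d c‖ := norm_pos_iff.mpr hd
  have hC (i : ℕ) (hi : i ≠ d) : ‖f i‖ ≤ ‖coeff d c‖ * max (p : ℝ)⁻¹ (s ^ (d + 1)) := by
    rw [hf]
    rcases hi.lt_or_gt with hid | hid
    · calc ‖coeff i c‖ * s ^ i ≤ ‖coeff i c‖ := mul_le_of_le_one_right (norm_nonneg _)
            (pow_le_one₀ hpos.le hlt.le)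
        _ ≤ ‖coeff d c‖ * (p : ℝ)⁻¹ := by
            rw [le_mul_inv_iff₀ (by exact_mod_cast (Fact.out : p.Prime).pos)]; exact hlow i hid
        _ ≤ _ := by gcongr; exact le_max_left _ _
    · exact mul_le_mul (hmax i)
        ((pow_le_pow_of_le_one hpos.le hlt.le hid).trans (le_max_right _ _))
        (by positivity) (norm_nonneg _)
  have heval := IsUltrametricDist.norm_tsum_eq_of_forall_ne_le hsum d (by positivity) hC (by
    rw [hf]
    exact mul_lt_mul_of_pos_left
      (max_lt hpd (pow_lt_pow_right_of_lt_one₀ hpos hlt d.lt_succ_self)) hcd)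
  have hzero : ∑' i, f i = 0 := hc ζ hζ
  rw [hzero, norm_zero, hf] at heval
  exact (mul_pos hcd (pow_pos hpos d)).ne heval

end Evaluation

theorem greenberg_divisibility_criterion_general (p : ℕ) [Fact p.Prime]
    (K : Type*) [NormedField K] [CompleteSpace K] [IsUltrametricDist K] [Algebra ℚ_[p] K]
    (hnorm : ∀ x : ℚ_[p], ‖algebraMap ℚ_[p] K x‖ = ‖x‖)
    (hroots : ∀ n : ℕ, ∃ ζ : K, orderOf ζ = p ^ n)
    (L g : PowerSeries (PowerSeries ℤ_[p]))
    (m : ℕ) (u : (PowerSeries (PowerSeries ℤ_[p]))ˣ)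
    (P : Polynomial (PowerSeries ℤ_[p]))
    (hP : P.Monic) (hPdeg : P.natDegree = m)
    (hPdist : ∀ i < m, P.coeff i ∈ IsLocalRing.maximalIdeal (PowerSeries ℤ_[p]))
    (hgP : g = (u : PowerSeries (PowerSeries ℤ_[p])) * (P : PowerSeries (PowerSeries ℤ_[p])))
    (hvanish : ∀ (h : PowerSeries (PowerSeries ℤ_[p])) (r : Polynomial (PowerSeries ℤ_[p])),
      r.degree < m → L = h * g + (r : PowerSeries (PowerSeries ℤ_[p])) →
      ∀ (j : ℕ) (ζ : K), (∃ n : ℕ, ζ ^ p ^ n = 1) →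
        pSeriesEval p K (r.coeff j) (ζ - 1) = 0) :
    g ∣ L := by
  have hPdistinguished : P.IsDistinguishedAt (maximalIdeal ℤ_[p]⟦X⟧) :=
    ⟨⟨fun hi => hPdist _ (hPdeg ▸ hi)⟩, hP⟩
  obtain ⟨q, r, hr, hLPq⟩ := hPdistinguished.exists_eq_mul_add (maximalIdeal.isMaximal _).ne_top L
  have hLgq : L = (↑u⁻¹ * q) * g + r := by
    rw [hLPq, hgP, mul_mul_mul_comm, Units.inv_mul, one_mul, mul_comm q]
  have hr0 : r = 0 := Polynomial.ext fun j => by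
    simpa using PowerSeries.eq_zero_of_forall_pSeriesEval_eq_zero hnorm hroots
      (hvanish _ r (hPdeg ▸ hr) hLgq j)
  exact ⟨↑u⁻¹ * q, by simpa [hr0, mul_comm] using hLgq⟩

/-- Greenberg's criterion: Let `L, g ∈ ℤ_p[[T₁,T₂]] = R[[T₁]]` with
`R = ℤ_p[[T₂]]`, and suppose `p ∤ g(T₁,0)`, so that `g` is a unit `u` times a
distinguished polynomial `P` of degree `m` over `R`.  If for every Weierstrass division
`L = h·g + r` with `deg_{T₁} r < m`, each coefficient `c_j(T₂)` of the remainder `r`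
vanishes at `T₂ = ζ − 1` for every `p`-power root of unity `ζ`, then `g` divides `L`
in `ℤ_p[[T₁,T₂]]`. -/
theorem greenberg_divisibility_criterion (p : ℕ) [Fact p.Prime]
    (K : Type*) [NormedField K] [CompleteSpace K] [IsUltrametricDist K] [Algebra ℚ_[p] K]
    (hnorm : ∀ x : ℚ_[p], ‖algebraMap ℚ_[p] K x‖ = ‖x‖)
    (hroots : ∀ n : ℕ, ∃ ζ : K, orderOf ζ = p ^ n)
    (L g : PowerSeries (PowerSeries ℤ_[p]))
    (hg : ¬ ((p : PowerSeries ℤ_[p]) ∣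
      PowerSeries.map (PowerSeries.constantCoeff (R := ℤ_[p])) g))
    (m : ℕ) (u : (PowerSeries (PowerSeries ℤ_[p]))ˣ)
    (P : Polynomial (PowerSeries ℤ_[p]))
    (hP : P.Monic) (hPdeg : P.natDegree = m)
    (hPdist : ∀ i < m, P.coeff i ∈ IsLocalRing.maximalIdeal (PowerSeries ℤ_[p]))
    (hgP : g = (u : PowerSeries (PowerSeries ℤ_[p])) * (P : PowerSeries (PowerSeries ℤ_[p])))
    (hvanish : ∀ (h : PowerSeries (PowerSeries ℤ_[p])) (r : Polynomial (PowerSeries ℤ_[p])),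
      r.degree < m → L = h * g + (r : PowerSeries (PowerSeries ℤ_[p])) →
      ∀ (j : ℕ) (ζ : K), (∃ n : ℕ, ζ ^ p ^ n = 1) →
        pSeriesEval p K (r.coeff j) (ζ - 1) = 0) :
    g ∣ L :=
  greenberg_divisibility_criterion_general p K hnorm hroots L g m u P hP hPdeg hPdist hgP hvanish
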